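/- Suppose the weight vector is a linear combination of difference feature vectors, w = Σ_{i,y} α(i,y)·(φ(x_i,y_i) − φ(x_i,y)), and the feature map decomposes over edges with the tensor-product structure φ_e(x,y_e) = φ_in(x) ⊗ Υ_e(y_e) with indicator embeddings Υ_e. Then for any input x and edge labeling y_e, the edge compatibility score ⟨w_e, φ_e(x,y_e)⟩ equals Σ_{i, u_e ∈ 𝒴_e} μ(i,e,u_e)·K_φ(x,x_i)·(K_{Υ,e}(y_{ie}, y_e) − K_{Υ,e}(u_e, y_e)), where μ(i,e,u_e) = Σ_y [y_e = u_e]·α(i,y), K_φ(x,x') = ⟨φ_in(x), φ_in(x')⟩, and K_{Υ,e}(u,u') = ⟨Υ_e(u), Υ_e(u')⟩. -/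

import Mathlib

/-! Expand `w` by bilinearity: the tensor identity factors each term into `K_φ · (K_Υ - K_Υ)`,
and grouping the sum over full labelings `y` by their restriction `u = y_e` to the edge turns
`α` into the marginal `μ`. -/

open Finset
open scoped InnerProductSpace

theorem sum_ite_fiber_mul {A B R : Type*} [Fintype A] [Fintype B] [DecidableEq B]
    [NonUnitalNonAssocSemiring R] (π : A → B) (α : A → R) (g : B → R) :
    ∑ u, (∑ a, if π a = u then α a else 0) * g u = ∑ a, α a * g (π a) := by
  simp only [sum_mul, ite_mul, zero_mul]
  rw [sum_comm]
  simp only [sum_ite_eq, mem_univ, if_true]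

theorem real_inner_tensor_sub_tensor {E F H : Type*}
    [NormedAddCommGroup E] [InnerProductSpace ℝ E] [NormedAddCommGroup F] [InnerProductSpace ℝ F]
    [NormedAddCommGroup H] [InnerProductSpace ℝ H] (tens : E → F → H)
    (htens : ∀ a c b d, ⟪tens a b, tens c d⟫_ℝ = ⟪a, c⟫_ℝ * ⟪b, d⟫_ℝ) (a c : E) (b b' d : F) :
    ⟪tens a b - tens a b', tens c d⟫_ℝ = ⟪a, c⟫_ℝ * (⟪b, d⟫_ℝ - ⟪b', d⟫_ℝ) := by
  rw [inner_sub_left, htens, htens, mul_sub]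

theorem stmt_10_general (k m : ℕ) (Y : Fin k → Type*) [∀ i, Fintype (Y i)] [∀ i, DecidableEq (Y i)]
    (j j' : Fin k)  -- the fixed edge e = (j,j')
    (X : Type*) (Hin H : Type*)
    [NormedAddCommGroup Hin] [InnerProductSpace ℝ Hin]
    [NormedAddCommGroup H] [InnerProductSpace ℝ H]
    (φin : X → Hin)
    (Υe : Y j × Y j' → EuclideanSpace ℝ (Y j × Y j'))
    (tens : Hin → EuclideanSpace ℝ (Y j × Y j') → H)
    (htens : ∀ a c b d, (inner ℝ (tens a b) (tens c d) : ℝ) = (inner ℝ a c : ℝ) * (inner ℝ b d : ℝ))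
    (x : Fin m → X) (ylab : Fin m → ∀ i, Y i) (α : Fin m → (∀ i, Y i) → ℝ)
    (μ : Fin m → Y j × Y j' → ℝ)
    (hμ : ∀ i u, μ i u = ∑ y : ∀ i', Y i', if (y j, y j') = u then α i y else 0)
    (w : H)
    (hw : w = ∑ i, ∑ y : ∀ i', Y i',
      α i y • (tens (φin (x i)) (Υe (ylab i j, ylab i j'))
                - tens (φin (x i)) (Υe (y j, y j'))))
    (xq : X) (ye : Y j × Y j') :
    (inner ℝ w (tens (φin xq) (Υe ye)) : ℝ)
      = ∑ i, ∑ u : Y j × Y j', μ i u * ((inner ℝ (φin xq) (φin (x i)) : ℝ)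
          * ((inner ℝ (Υe (ylab i j, ylab i j')) (Υe ye) : ℝ)
              - (inner ℝ (Υe u) (Υe ye) : ℝ))) := by
  subst hw
  rw [sum_inner]
  refine sum_congr rfl fun i _ => ?_
  simp only [hμ, sum_inner, real_inner_smul_left]
  rw [sum_ite_fiber_mul (fun y : ∀ i', Y i' => (y j, y j'))]
  refine sum_congr rfl fun y _ => ?_
  rw [real_inner_tensor_sub_tensor tens htens, real_inner_comm (φin xq)]

/-- Lemma 1: with a tensor-product feature map and indicator output embeddings,
the edge compatibility score `⟪w_e, φ_e(x,y_e)⟫` can be expressed in terms of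
marginal dual variables `μ(i,e,u_e)` and the input/output kernels. -/
theorem stmt_10 (k m : ℕ) (Y : Fin k → Type*) [∀ i, Fintype (Y i)] [∀ i, DecidableEq (Y i)]
    (j j' : Fin k)  -- the fixed edge e = (j,j')
    (X : Type*) (Hin H : Type*)
    [NormedAddCommGroup Hin] [InnerProductSpace ℝ Hin]
    [NormedAddCommGroup H] [InnerProductSpace ℝ H]
    (φin : X → Hin)
    (Υe : Y j × Y j' → EuclideanSpace ℝ (Y j × Y j'))
    (hΥe : ∀ u v, Υe u v = if u = v then (1 : ℝ) else 0)
    (tens : Hin → EuclideanSpace ℝ (Y j × Y j') → H)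
    (htens : ∀ a c b d, (inner ℝ (tens a b) (tens c d) : ℝ) = (inner ℝ a c : ℝ) * (inner ℝ b d : ℝ))
    (x : Fin m → X) (ylab : Fin m → ∀ i, Y i) (α : Fin m → (∀ i, Y i) → ℝ)
    (μ : Fin m → Y j × Y j' → ℝ)
    (hμ : ∀ i u, μ i u = ∑ y : ∀ i', Y i', if (y j, y j') = u then α i y else 0)
    (w : H)
    (hw : w = ∑ i, ∑ y : ∀ i', Y i',
      α i y • (tens (φin (x i)) (Υe (ylab i j, ylab i j'))
                - tens (φin (x i)) (Υe (y j, y j'))))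
    (xq : X) (ye : Y j × Y j') :
    (inner ℝ w (tens (φin xq) (Υe ye)) : ℝ)
      = ∑ i, ∑ u : Y j × Y j', μ i u * ((inner ℝ (φin xq) (φin (x i)) : ℝ)
          * ((inner ℝ (Υe (ylab i j, ylab i j')) (Υe ye) : ℝ)
              - (inner ℝ (Υe u) (Υe ye) : ℝ))) :=
  stmt_10_general k m Y j j' X Hin H φin Υe tens htens x ylab α μ hμ w hw xq ye
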